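/- arXiv:2401.00592 — 2 statements merged into one kernel-verified Lean document; each statement's English description precedes it below -/
import Mathlib

section
/- Theorem (location family with symmetric distribution): Let X⁰ be an integrable real-valued random variable whose distribution is symmetric about 0 (X⁰ and -X⁰ have the same law), let μ ∈ ℝ, and set X^μ = X⁰ + μ and X^{-μ} = X⁰ - μ. Let I : ℝ → [0,1] be measurable with I(x) + I(-x) = 1 for all x. Then E[I(X^{-μ})·X^{-μ}] = E[I(X^μ)·X^μ] - μ. -/
/-!
Write `f x = I x * x`. Antisymmetry of `I` gives `f (-x) = f x - x`, and `X⁰ - μ` has the law of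
`-(X⁰ + μ)` because `X⁰` has the law of `-X⁰`. Hence
`E f(X⁰ - μ) = E f(-(X⁰ + μ)) = E f(X⁰ + μ) - E (X⁰ + μ)`, and `E X⁰ = 0` by symmetry.
-/

open MeasureTheory ProbabilityTheory

lemma mul_neg_self_of_add_neg_eq_one {I : ℝ → ℝ} (hanti : ∀ x, I x + I (-x) = 1) (x : ℝ) :
    I (-x) * -x = I x * x - x := by
  have hneg : I (-x) = 1 - I x := by linarith [hanti x]
  rw [hneg]
  ring

namespace ProbabilityTheory.IdentDistrib

variable {Ω : Type*} [MeasurableSpace Ω] {P : Measure Ω}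

lemma integral_eq_zero_of_neg {X : Ω → ℝ} (h : IdentDistrib X (fun ω => -X ω) P P) :
    ∫ ω, X ω ∂P = 0 := by
  have hself := h.integral_eq
  rw [integral_neg] at hself
  linarith

lemma integral_mul_self_of_neg {I : ℝ → ℝ} (hI : Measurable I)
    (hanti : ∀ x, I x + I (-x) = 1) {Y Z : Ω → ℝ} (hY : Integrable Y P)
    (hIY : Integrable (fun ω => I (Y ω) * Y ω) P) (hZ : IdentDistrib Z (fun ω => -Y ω) P P) :
    ∫ ω, I (Z ω) * Z ω ∂P = ∫ ω, I (Y ω) * Y ω ∂P - ∫ ω, Y ω ∂P := calc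
  ∫ ω, I (Z ω) * Z ω ∂P = ∫ ω, I (-Y ω) * -Y ω ∂P := (hZ.comp (hI.mul measurable_id)).integral_eq
  _ = ∫ ω, (I (Y ω) * Y ω - Y ω) ∂P := by simp only [mul_neg_self_of_add_neg_eq_one hanti]
  _ = ∫ ω, I (Y ω) * Y ω ∂P - ∫ ω, Y ω ∂P := integral_sub hIY hY

end ProbabilityTheory.IdentDistrib

theorem location_family_symmetric_scalar_general {Ω : Type*} [MeasureSpace Ω]
    [IsProbabilityMeasure (ℙ : Measure Ω)]
    (X0 : Ω → ℝ) (hX0 : Integrable X0)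
    (hsymm : Measure.map X0 (ℙ : Measure Ω) = Measure.map (fun ω => -(X0 ω)) ℙ)
    (μ : ℝ)
    (I : ℝ → ℝ) (hI : Measurable I)
    (hI01 : ∀ x, I x ∈ Set.Icc (0 : ℝ) 1)
    (hanti : ∀ x, I x + I (-x) = 1) :
    (∫ ω, I (X0 ω - μ) * (X0 ω - μ)) = (∫ ω, I (X0 ω + μ) * (X0 ω + μ)) - μ := by
  have hlaw : IdentDistrib X0 (fun ω => -X0 ω) := ⟨hX0.aemeasurable, hX0.aemeasurable.neg, hsymm⟩
  have hshift : IdentDistrib (fun ω => X0 ω - μ) (fun ω => -(X0 ω + μ)) := by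
    simpa only [Function.comp_def, neg_add'] using hlaw.comp (measurable_sub_const μ)
  have hXμ : Integrable (fun ω => X0 ω + μ) := hX0.add (integrable_const μ)
  have hIXμ : Integrable (fun ω => I (X0 ω + μ) * (X0 ω + μ)) :=
    hXμ.bdd_mul (hI.comp_aemeasurable hXμ.aemeasurable).aestronglyMeasurable
      (c := 1) (.of_forall fun ω => abs_le.2 ⟨by linarith [(hI01 (X0 ω + μ)).1], (hI01 _).2⟩)
  rw [hshift.integral_mul_self_of_neg hI hanti hXμ hIXμ, integral_add hX0 (integrable_const μ),
    hlaw.integral_eq_zero_of_neg]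
  simp

/-- Location family with symmetric distribution (single agent): if `X⁰` is
integrable with law symmetric about `0`, `X^μ = X⁰ + μ`, `X^{-μ} = X⁰ - μ`,
and `I` is an antisymmetric acceptance rule with values in `[0,1]`, then
`E[I(X^{-μ})·X^{-μ}] = E[I(X^μ)·X^μ] - μ`. -/
theorem location_family_symmetric_scalar {Ω : Type*} [MeasureSpace Ω]
    [IsProbabilityMeasure (ℙ : Measure Ω)]
    (X0 : Ω → ℝ) (hX0 : Integrable X0) (hmeas : Measurable X0)
    (hsymm : Measure.map X0 (ℙ : Measure Ω) = Measure.map (fun ω => -(X0 ω)) ℙ)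
    (μ : ℝ)
    (I : ℝ → ℝ) (hI : Measurable I)
    (hI01 : ∀ x, I x ∈ Set.Icc (0 : ℝ) 1)
    (hanti : ∀ x, I x + I (-x) = 1) :
    (∫ ω, I (X0 ω - μ) * (X0 ω - μ)) = (∫ ω, I (X0 ω + μ) * (X0 ω + μ)) - μ :=
  location_family_symmetric_scalar_general X0 hX0 hsymm μ I hI hI01 hanti
end

section
/- Multivariate location family theorem: Let X⁰ be an integrable ℝⁿ-valued random vector with law symmetric about 0 (X⁰ and -X⁰ identically distributed), μ ∈ ℝ, X^μ = X⁰ + μ·𝟙 and X^{-μ} = X⁰ - μ·𝟙 where 𝟙 = (1,...,1). Let I : ℝⁿ → [0,1] be measurable with I(x) + I(-x) = 1 for all x ∈ ℝⁿ. Then E[I(X^{-μ})·X^{-μ}] = E[I(X^μ)·X^μ] - μ·𝟙. -/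
open MeasureTheory ProbabilityTheory

/-!
Write `Y = X⁰ + c` with `c = μ·𝟙`. Since `-X⁰` has the law of `X⁰`, the vector `X⁰ - c` may be
replaced by `-X⁰ - c = -Y`, and antisymmetry gives `I(-Y)·(-Y) = I(Y)·Y - Y` pointwise.
Integrating, `E[I(X^{-μ})·X^{-μ}] = E[I(Y)·Y] - E[Y]`, and `E[Y] = E[X⁰] + c = c` by symmetry.
-/

theorem smul_neg_eq_smul_sub_of_add_apply_neg_eq_one {R M : Type*} [CommRing R]
    [AddCommGroup M] [Module R M] {I : M → R} (hanti : ∀ x, I x + I (-x) = 1) (x : M) :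
    I (-x) • -x = I x • x - x := by
  rw [eq_sub_of_add_eq' (hanti x)]
  module

section

variable {Ω E : Type*} [MeasurableSpace Ω] {P : Measure Ω}
  [NormedAddCommGroup E] [NormedSpace ℝ E] [MeasurableSpace E] [BorelSpace E]

theorem ProbabilityTheory.IdentDistrib.integral_eq_zero_of_neg_s7 {X : Ω → E}
    (hX : IdentDistrib X (-X) P P) : ∫ ω, X ω ∂P = 0 := by
  have h := hX.integral_eq
  rw [Pi.neg_def, integral_neg] at h
  have := IsAddTorsionFree.of_isTorsionFree ℝ E
  exact self_eq_neg.mp h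

theorem MeasureTheory.Integrable.smul_of_norm_le_one {X : Ω → E} (hX : Integrable X P)
    {I : E → ℝ} (hI : Measurable I) (hI1 : ∀ x, ‖I x‖ ≤ 1) :
    Integrable (fun ω => I (X ω) • X ω) P :=
  hX.bdd_smul 1 (hI.comp_aemeasurable hX.aemeasurable).aestronglyMeasurable
    (Filter.Eventually.of_forall fun ω => hI1 (X ω))

variable [SecondCountableTopology E] [CompleteSpace E] [IsProbabilityMeasure P]

theorem integral_smul_sub_eq_integral_smul_add_sub {X : Ω → E} (hX : Integrable X P)
    (hsymm : IdentDistrib X (-X) P P) {I : E → ℝ} (hI : Measurable I)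
    (hI1 : ∀ x, ‖I x‖ ≤ 1) (hanti : ∀ x, I x + I (-x) = 1) (c : E) :
    ∫ ω, I (X ω - c) • (X ω - c) ∂P = ∫ ω, I (X ω + c) • (X ω + c) ∂P - c := by
  have hY : Integrable (fun ω => X ω + c) P := hX.add (integrable_const c)
  have hreflect : ∫ ω, I (X ω - c) • (X ω - c) ∂P = ∫ ω, I (-X ω - c) • (-X ω - c) ∂P :=
    (hsymm.comp ((hI.comp (measurable_id.sub_const c)).smul
      (measurable_id.sub_const c))).integral_eq
  have hmean : ∫ ω, X ω + c ∂P = c := by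
    rw [integral_add hX (integrable_const c), hsymm.integral_eq_zero_of_neg_s7, integral_const,
      probReal_univ, one_smul, zero_add]
  calc ∫ ω, I (X ω - c) • (X ω - c) ∂P
      = ∫ ω, (I (X ω + c) • (X ω + c) - (X ω + c)) ∂P := by
        simp_rw [hreflect, ← smul_neg_eq_smul_sub_of_add_apply_neg_eq_one hanti, neg_add']
    _ = ∫ ω, I (X ω + c) • (X ω + c) ∂P - c := by
        rw [integral_sub (hY.smul_of_norm_le_one hI hI1) hY, hmean]

end

theorem location_family_symmetric_vector_general {Ω : Type*} [MeasureSpace Ω]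
    [IsProbabilityMeasure (ℙ : Measure Ω)] {n : ℕ}
    (X0 : Ω → (Fin n → ℝ)) (hX0 : Integrable X0)
    (hsymm : Measure.map X0 (ℙ : Measure Ω) = Measure.map (fun ω => -(X0 ω)) ℙ)
    (μ : ℝ)
    (I : (Fin n → ℝ) → ℝ) (hI : Measurable I)
    (hI01 : ∀ x, I x ∈ Set.Icc (0 : ℝ) 1)
    (hanti : ∀ x, I x + I (-x) = 1) :
    (∫ ω, I (X0 ω - μ • (1 : Fin n → ℝ)) • (X0 ω - μ • (1 : Fin n → ℝ)))
      = (∫ ω, I (X0 ω + μ • (1 : Fin n → ℝ)) • (X0 ω + μ • (1 : Fin n → ℝ)))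
        - μ • (1 : Fin n → ℝ) := by
  have hident : IdentDistrib X0 (-X0) ℙ ℙ :=
    ⟨hX0.aemeasurable, hX0.aemeasurable.neg, hsymm⟩
  have hI1 : ∀ x, ‖I x‖ ≤ 1 := fun x => (Real.norm_of_nonneg (hI01 x).1).trans_le (hI01 x).2
  exact integral_smul_sub_eq_integral_smul_add_sub hX0 hident hI hI1 hanti _

/-- Multivariate location family theorem: if `X⁰` is an integrable random
vector with law symmetric about the origin, `X^μ = X⁰ + μ·𝟙`, and `I` is an
antisymmetric acceptance rule with values in `[0,1]`, then
`E[I(X^{-μ})·X^{-μ}] = E[I(X^μ)·X^μ] - μ·𝟙`. -/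
theorem location_family_symmetric_vector {Ω : Type*} [MeasureSpace Ω]
    [IsProbabilityMeasure (ℙ : Measure Ω)] {n : ℕ}
    (X0 : Ω → (Fin n → ℝ)) (hX0 : Integrable X0) (hmeas : Measurable X0)
    (hsymm : Measure.map X0 (ℙ : Measure Ω) = Measure.map (fun ω => -(X0 ω)) ℙ)
    (μ : ℝ)
    (I : (Fin n → ℝ) → ℝ) (hI : Measurable I)
    (hI01 : ∀ x, I x ∈ Set.Icc (0 : ℝ) 1)
    (hanti : ∀ x, I x + I (-x) = 1) :
    (∫ ω, I (X0 ω - μ • (1 : Fin n → ℝ)) • (X0 ω - μ • (1 : Fin n → ℝ)))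
      = (∫ ω, I (X0 ω + μ • (1 : Fin n → ℝ)) • (X0 ω + μ • (1 : Fin n → ℝ)))
        - μ • (1 : Fin n → ℝ) :=
  location_family_symmetric_vector_general X0 hX0 hsymm μ I hI hI01 hanti
end
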